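/- (Strategy Stealing) Let G=(V,E_L,E_R) be an achievement positional game. If there exists a bijection σ: V → V such that for every e∈E_R both σ(e)∈E_L and σ^{-1}(e)∈E_L, then Left has a non-losing strategy on G as first player. -/

import Mathlib

namespace APG

/-- The two players: Left and Right. -/
inductive Player : Type
  | L : Player
  | R : Player
deriving DecidableEq, Repr

/-- The opponent of a player. -/
def Player.other : Player → Player
  | .L => .R
  | .R => .L

/-- An achievement positional game: a finite vertex set together with the set of
blue edges (Left's winning sets) and the set of red edges (Right's winning sets). -/
structure Game : Type where
  V : Finset ℕ
  EL : Finset (Finset ℕ)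
  ER : Finset (Finset ℕ)

/-- The edges are nonempty subsets of the vertex set. -/
def WellFormed (G : Game) : Prop :=
  (∀ e ∈ G.EL, e ⊆ G.V ∧ e.Nonempty) ∧ (∀ e ∈ G.ER, e ⊆ G.V ∧ e.Nonempty)

/-- The winning sets of a given player. -/
def Game.edges (G : Game) : Player → Finset (Finset ℕ)
  | .L => G.EL
  | .R => G.ER

/-- The player who makes the `i`-th move (0-indexed) when `s` moves first. -/
def mover (s : Player) (i : ℕ) : Player := if i % 2 = 0 then s else s.other

/-- The set of vertices picked by player `p` along the history `h`
(the chronological list of the moves played so far), when `s` moved first. -/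
def picked (s p : Player) (h : List ℕ) : Finset ℕ :=
  ((Finset.range h.length).filter fun i => mover s i = p).image fun i => h.getD i 0

/-- The set `S` of picked vertices fills some edge of `E`. -/
def fills (E : Finset (Finset ℕ)) (S : Finset ℕ) : Prop := ∃ e ∈ E, e ⊆ S

/-- The game is over: some player has picked all the vertices of one of their edges. -/
def ended (G : Game) (s : Player) (h : List ℕ) : Prop :=
  fills G.EL (picked s .L h) ∨ fills G.ER (picked s .R h)

/-- `h` is a legal history: no vertex is picked twice, every picked vertex belongs to
the board, and no move is made after the game has ended. -/
def ValidHist (G : Game) (s : Player) (h : List ℕ) : Prop :=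
  h.Nodup ∧ (∀ x ∈ h, x ∈ G.V) ∧ ∀ k, k < h.length → ¬ ended G s (h.take k)

/-- A strategy: a map assigning to each position (history) a vertex to pick. -/
abbrev Strategy := List ℕ → ℕ

/-- Along `h`, every move of player `p` agrees with the strategy `σ`. -/
def Follows (s p : Player) (σ : Strategy) (h : List ℕ) : Prop :=
  ∀ k, k < h.length → mover s k = p → h.getD k 0 = σ (h.take k)

/-- A finished play: either the game has ended or all vertices have been picked. -/
def Complete (G : Game) (s : Player) (h : List ℕ) : Prop :=
  ended G s h ∨ h.length = G.V.card

/-- The strategy `σ` of player `p` always suggests a legal move (an unpicked vertex)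
whenever the game is not over and it is `p`'s turn. -/
def Legal (G : Game) (s p : Player) (σ : Strategy) : Prop :=
  ∀ h, ValidHist G s h → Follows s p σ h → ¬ ended G s h → h.length < G.V.card →
    mover s h.length = p → σ h ∈ G.V ∧ σ h ∉ h

/-- Player `p` has a winning strategy on `G` when `s` moves first: following it,
every finished play ends with `p` having filled one of their edges (and, the game
having ended right there, the opponent has not filled an edge first). -/
def WinsAs (G : Game) (s p : Player) : Prop :=
  ∃ σ : Strategy, Legal G s p σ ∧
    ∀ h, ValidHist G s h → Follows s p σ h → Complete G s h →
      fills (G.edges p) (picked s p h)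

/-- Player `p` has a non-losing strategy on `G` when `s` moves first: following it,
the opponent never fills one of their edges. -/
def NonLosingAs (G : Game) (s p : Player) : Prop :=
  ∃ σ : Strategy, Legal G s p σ ∧
    ∀ h, ValidHist G s h → Follows s p σ h → Complete G s h →
      ¬ fills (G.edges p.other) (picked s p.other h)

/-- The possible results of the game, for a fixed starting player. -/
inductive Result : Type
  | Lwin : Result
  | draw : Result
  | Rwin : Result
deriving DecidableEq, Repr

/-- The result of `G` with optimal play, when `s` moves first, is `r`:
a win for a player means that player has a winning strategy, a draw means
both players have non-losing strategies. -/
def resultIs (G : Game) (s : Player) : Result → Prop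
  | .Lwin => WinsAs G s .L
  | .Rwin => WinsAs G s .R
  | .draw => NonLosingAs G s .L ∧ NonLosingAs G s .R

/-- An outcome: the pair of results with optimal play
(when Left starts, when Right starts). -/
abbrev Outcome := Result × Result

/-- `G` has outcome `o`. -/
def hasOutcome (G : Game) (o : Outcome) : Prop :=
  resultIs G .L o.1 ∧ resultIs G .R o.2

/-- Numerical value of a result, from Left's point of view:
Right wins < draw < Left wins. -/
def Result.val : Result → ℕ
  | .Rwin => 0
  | .draw => 1
  | .Lwin => 2

/-- The partial order `≤_L` on outcomes, comparing both components simultaneously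
from Left's point of view. -/
def outLE (o o' : Outcome) : Prop := o.1.val ≤ o'.1.val ∧ o.2.val ≤ o'.2.val

def oL : Outcome := (.Lwin, .Lwin)
def oLminus : Outcome := (.Lwin, .draw)
def oN : Outcome := (.Lwin, .Rwin)
def oD : Outcome := (.draw, .draw)
def oRminus : Outcome := (.draw, .Rwin)
def oR : Outcome := (.Rwin, .Rwin)

/-- The updated game `G_u` after Left has picked `u`. -/
def subL (G : Game) (u : ℕ) : Game where
  V := G.V.erase u
  EL := G.EL.image fun e => e.erase u
  ER := G.ER.filter fun e => u ∉ e

/-- The updated game `G^u` after Right has picked `u`. -/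
def subR (G : Game) (u : ℕ) : Game where
  V := G.V.erase u
  EL := G.EL.filter fun e => u ∉ e
  ER := G.ER.image fun e => e.erase u

/-- The updated game `G_u^v` after Left has picked `u` and Right has picked `v`. -/
def updLR (G : Game) (u v : ℕ) : Game where
  V := (G.V.erase u).erase v
  EL := (G.EL.filter fun e => v ∉ e).image fun e => e.erase u
  ER := (G.ER.filter fun e => u ∉ e).image fun e => e.erase v

/-- The disjoint union of two games. -/
def gunion (G G' : Game) : Game where
  V := G.V ∪ G'.V
  EL := G.EL ∪ G'.EL
  ER := G.ER ∪ G'.ER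

/-!
Positional games are determined: by backward induction on the remaining moves, either Left
(moving first) can prevent Right from ever filling a red edge, or Right has a winning strategy
`τ`. The second case is impossible. Let Right follow `τ` in the real play `h`, and let `τ` also
play Right in an imaginary play `H`, one move behind, in which Left answers each real Right move
`v` by `σ⁻¹ v`; in the real play Left copies each imaginary Right move `w` as `σ w` (or plays
anywhere if `σ w` is taken already, necessarily by Left). Then `σ⁻¹` maps Right's real picks to
Left's imaginary ones and `σ` maps Right's imaginary picks into Left's real ones. When the real
play ends, `τ` has filled a red edge `σ e'` there, so `e'` is filled by Left in `H`; hence `τ`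
has filled a red edge `e₂` in `H` too, and Left has filled the blue edge `σ e₂` in the real
play. Both players have filled an edge, which no legal play allows.
-/

lemma mover_succ (s : Player) (n : ℕ) : mover s (n + 1) = (mover s n).other := by
  unfold mover
  cases s <;> split_ifs <;> first | rfl | omega

lemma mover_eq_or (s p : Player) (n : ℕ) : mover s n = p ∨ mover s n = p.other := by
  cases mover s n <;> cases p <;> decide

lemma ended_iff {G : Game} {s : Player} {h : List ℕ} (p : Player) :
    ended G s h ↔
      fills (G.edges p) (picked s p h) ∨ fills (G.edges p.other) (picked s p.other h) := by
  cases p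
  · rfl
  · exact or_comm

section History

variable {G : Game} {s p : Player} {h : List ℕ} {x : ℕ}

lemma mem_picked :
    x ∈ picked s p h ↔ ∃ i, i < h.length ∧ mover s i = p ∧ h.getD i 0 = x := by
  simp [picked, and_assoc]

lemma mem_of_mem_picked (hx : x ∈ picked s p h) : x ∈ h := by
  obtain ⟨i, hi, -, rfl⟩ := mem_picked.1 hx
  rw [List.getD_eq_getElem _ _ hi]
  exact List.getElem_mem hi

lemma mem_picked_or_mem_picked_other (hx : x ∈ h) :
    x ∈ picked s p h ∨ x ∈ picked s p.other h := by
  obtain ⟨i, hi, rfl⟩ := List.getElem_of_mem hx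
  have hget : h.getD i 0 = h[i] := List.getD_eq_getElem _ _ hi
  rcases mover_eq_or s p i with hm | hm
  · exact .inl (mem_picked.2 ⟨i, hi, hm, hget⟩)
  · exact .inr (mem_picked.2 ⟨i, hi, hm, hget⟩)

@[simp]
lemma picked_nil : picked s p [] = ∅ := rfl

lemma picked_append_singleton :
    picked s p (h ++ [x]) =
      if mover s h.length = p then insert x (picked s p h) else picked s p h := by
  have hprefix : ∀ i ∈ (Finset.range h.length).filter (fun i => mover s i = p),
      (h ++ [x]).getD i 0 = h.getD i 0 := fun i hi =>
    List.getD_append _ _ _ _ (Finset.mem_range.1 (Finset.mem_filter.1 hi).1)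
  simp only [picked, List.length_append, List.length_singleton, Finset.range_add_one,
    Finset.filter_insert]
  split_ifs
  · rw [Finset.image_insert, Finset.image_congr hprefix,
      List.getD_append_right _ _ _ _ le_rfl, Nat.sub_self]
    rfl
  · exact Finset.image_congr hprefix

lemma picked_append_singleton_of_mover_eq (hm : mover s h.length = p) :
    picked s p (h ++ [x]) = insert x (picked s p h) := by
  rw [picked_append_singleton, if_pos hm]

lemma picked_append_singleton_of_mover_ne (hm : mover s h.length ≠ p) :
    picked s p (h ++ [x]) = picked s p h := by
  rw [picked_append_singleton, if_neg hm]

lemma validHist_nil : ValidHist G s [] :=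
  ⟨List.nodup_nil, by simp, by simp⟩

lemma validHist_append_singleton_iff :
    ValidHist G s (h ++ [x]) ↔ ValidHist G s h ∧ ¬ ended G s h ∧ x ∈ G.V ∧ x ∉ h := by
  have htake : ∀ k ≤ h.length, (h ++ [x]).take k = h.take k := fun k hk =>
    List.take_append_of_le_length hk
  simp only [ValidHist, List.nodup_append, List.nodup_singleton, List.mem_append,
    List.mem_singleton, List.length_append, List.length_singleton]
  constructor
  · rintro ⟨⟨hnd, -, hdisj⟩, hmem, hend⟩
    refine ⟨⟨hnd, fun y hy => hmem y (.inl hy), fun k hk => ?_⟩, ?_, hmem x (.inr rfl),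
      fun hx => hdisj x hx x rfl rfl⟩
    · simpa [htake k hk.le] using hend k (by omega)
    · simpa [htake h.length le_rfl] using hend h.length (by omega)
  · rintro ⟨⟨hnd, hmem, hend⟩, hne, hxV, hxh⟩
    refine ⟨⟨hnd, trivial, fun a ha b hb hab => ?_⟩, ?_, fun k hk => ?_⟩
    · exact hxh (hb ▸ hab ▸ ha)
    · rintro y (hy | rfl)
      exacts [hmem y hy, hxV]
    · rcases Nat.lt_succ_iff_lt_or_eq.1 hk with hk | rfl
      · rw [htake k hk.le]
        exact hend k hk
      · rwa [htake _ le_rfl, List.take_length]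

lemma follows_nil {τ : Strategy} : Follows s p τ [] := fun _ hk => absurd hk (Nat.not_lt_zero _)

lemma follows_append_singleton_iff {τ : Strategy} :
    Follows s p τ (h ++ [x]) ↔ Follows s p τ h ∧ (mover s h.length = p → x = τ h) := by
  have hlast : (h ++ [x]).getD h.length 0 = x := by
    rw [List.getD_append_right _ _ _ _ le_rfl, Nat.sub_self]
    rfl
  have hprefix : ∀ k < h.length,
      (h ++ [x]).getD k 0 = h.getD k 0 ∧ (h ++ [x]).take k = h.take k := fun k hk =>
    ⟨List.getD_append _ _ _ _ hk, List.take_append_of_le_length hk.le⟩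
  simp only [Follows, List.length_append, List.length_singleton]
  constructor
  · intro hf
    refine ⟨fun k hk hm => ?_, fun hm => ?_⟩
    · rw [← (hprefix k hk).1, ← (hprefix k hk).2]
      exact hf k (by omega) hm
    · simpa [hlast] using hf h.length (by omega) hm
  · rintro ⟨hf, hx⟩ k hk hm
    rcases Nat.lt_succ_iff_lt_or_eq.1 hk with hk | rfl
    · rw [(hprefix k hk).1, (hprefix k hk).2]
      exact hf k hk hm
    · rw [hlast, List.take_left]
      exact hx hm

lemma ValidHist.length_le (hv : ValidHist G s h) : h.length ≤ G.V.card := by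
  rw [← List.toFinset_card_of_nodup hv.1]
  exact Finset.card_le_card fun y hy => hv.2.1 y (List.mem_toFinset.1 hy)

lemma ValidHist.exists_fresh (hv : ValidHist G s h) (hlt : h.length < G.V.card) :
    ∃ x ∈ G.V, x ∉ h := by
  by_contra! hall
  have := Finset.card_le_card fun y (hy : y ∈ G.V) => List.mem_toFinset.2 (hall y hy)
  rw [List.toFinset_card_of_nodup hv.1] at this
  omega

/-- In a legal play, the game stops as soon as one player fills an edge. -/
lemma ValidHist.not_fills_both (hv : ValidHist G s h) (hne : h ≠ []) :
    ¬ (fills G.EL (picked s .L h) ∧ fills G.ER (picked s .R h)) := by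
  rintro ⟨hL, hR⟩
  obtain ⟨h, x, rfl⟩ := (List.eq_nil_or_concat' _).resolve_left hne
  have hnend := (validHist_append_singleton_iff.1 hv).2.1
  rcases mover_eq_or s .L h.length with hm | hm
  · rw [picked_append_singleton_of_mover_ne (by rw [hm]; decide)] at hR
    exact hnend (.inr hR)
  · rw [picked_append_singleton_of_mover_ne (by rw [hm]; decide)] at hL
    exact hnend (.inl hL)

theorem play_induction {τ : Strategy} {P : List ℕ → Prop} (nil : P [])
    (append : ∀ h x, ValidHist G s (h ++ [x]) → Follows s p τ (h ++ [x]) → P h →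
      P (h ++ [x]))
    (hv : ValidHist G s h) (hf : Follows s p τ h) : P h := by
  induction h using List.reverseRecOn with
  | nil => exact nil
  | append_singleton h x ih =>
    exact append h x hv hf (ih (validHist_append_singleton_iff.1 hv).1
      (follows_append_singleton_iff.1 hf).1)

end History

section Determinacy

variable {G : Game} {s p : Player}

def Safe (G : Game) (s p : Player) (h : List ℕ) : Prop :=
  ¬ fills (G.edges p.other) (picked s p.other h) ∧
    (h.length < G.V.card → ¬ ended G s h →
      if mover s h.length = p then ∃ x ∈ G.V, x ∉ h ∧ Safe G s p (h ++ [x])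
      else ∀ x ∈ G.V, x ∉ h → Safe G s p (h ++ [x]))
termination_by G.V.card - h.length
decreasing_by all_goals simp only [List.length_append, List.length_singleton]; omega

lemma fills_of_not_safe {h : List ℕ} (hs : ¬ Safe G s p h) (hc : Complete G s h) :
    fills (G.edges p.other) (picked s p.other h) := by
  rw [Safe] at hs
  by_contra hf
  refine hs ⟨hf, fun hlt hne => ?_⟩
  rcases hc with hend | hfull
  exacts [absurd hend hne, absurd hfull hlt.ne]

lemma Safe.not_fills {h : List ℕ} (hs : Safe G s p h) :
    ¬ fills (G.edges p.other) (picked s p.other h) := by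
  rw [Safe] at hs
  exact hs.1

noncomputable def seekStrategy (G : Game) (P : List ℕ → Prop) : Strategy := fun h =>
  open Classical in
  if hx : ∃ x ∈ G.V, x ∉ h ∧ P (h ++ [x]) then hx.choose
  else if hy : ∃ x ∈ G.V, x ∉ h then hy.choose else 0

lemma seekStrategy_legal (P : List ℕ → Prop) : Legal G s p (seekStrategy G P) := by
  intro h hv _ _ hlt _
  unfold seekStrategy
  split_ifs with hx hy
  · exact ⟨hx.choose_spec.1, hx.choose_spec.2.1⟩
  · exact hy.choose_spec
  · exact absurd (hv.exists_fresh hlt) hy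

lemma seekStrategy_spec {P : List ℕ → Prop} {h : List ℕ}
    (hx : ∃ x ∈ G.V, x ∉ h ∧ P (h ++ [x])) : P (h ++ [seekStrategy G P h]) := by
  rw [seekStrategy, dif_pos hx]
  exact hx.choose_spec.2.2

lemma nonLosingAs_of_safe (h0 : Safe G s p []) : NonLosingAs G s p := by
  refine ⟨seekStrategy G (Safe G s p), seekStrategy_legal _, fun h hv hf _ => ?_⟩
  refine (play_induction h0 (fun h x hv hf hs => ?_) hv hf).not_fills
  obtain ⟨-, hne, hxV, hxh⟩ := validHist_append_singleton_iff.1 hv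
  rw [Safe] at hs
  have hmove := hs.2 (by simpa using hv.length_le) hne
  split_ifs at hmove with hm
  · rw [(follows_append_singleton_iff.1 hf).2 hm]
    exact seekStrategy_spec hmove
  · exact hmove x hxV hxh

lemma winsAs_other_of_not_safe (h0 : ¬ Safe G s p []) : WinsAs G s p.other := by
  refine ⟨seekStrategy G (¬ Safe G s p ·), seekStrategy_legal _, fun h hv hf hc => ?_⟩
  refine fills_of_not_safe (play_induction (P := (¬ Safe G s p ·)) h0
    (fun h x hv hf hs => ?_) hv hf) hc
  obtain ⟨-, hne, hxV, hxh⟩ := validHist_append_singleton_iff.1 hv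
  rw [Safe] at hs
  have hmove : ¬ _ := fun hm => hs ⟨fun hfill => hne ((ended_iff p).2 (.inr hfill)),
    fun _ _ => hm⟩
  split_ifs at hmove with hm
  · push Not at hmove
    exact hmove x hxV hxh
  · push Not at hmove
    rw [(follows_append_singleton_iff.1 hf).2 ((mover_eq_or s p h.length).resolve_left hm)]
    exact seekStrategy_spec (P := (¬ Safe G s p ·)) hmove

theorem nonLosingAs_or_winsAs_other (G : Game) (s p : Player) :
    NonLosingAs G s p ∨ WinsAs G s p.other := by
  by_cases h0 : Safe G s p []
  · exact .inl (nonLosingAs_of_safe h0)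
  · exact .inr (winsAs_other_of_not_safe h0)

end Determinacy

lemma fills_of_image_subset {E E' : Finset (Finset ℕ)} {S T : Finset ℕ} {σ : ℕ → ℕ}
    (hE : ∀ e ∈ E, e.image σ ∈ E') (hS : fills E S) (hST : S.image σ ⊆ T) :
    fills E' T := by
  obtain ⟨e, he, heS⟩ := hS
  exact ⟨_, hE e he, (Finset.image_subset_image heS).trans hST⟩

section StrategyStealing

variable {G : Game} {σ g : ℕ → ℕ} {τ : Strategy}

structure Mirror (G : Game) (τ : Strategy) (σ g : ℕ → ℕ) (h H : List ℕ) : Prop where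
  valid : ValidHist G .L h
  follows : Follows .L .R τ h
  valid_imaginary : ValidHist G .L H
  follows_imaginary : Follows .L .R τ H
  length_eq : H.length + 1 = h.length
  picked_left : picked .L .L H = (picked .L .R h).image g
  picked_right : (picked .L .R H).image σ ⊆ picked .L .L h

lemma Mirror.movers {h H : List ℕ} (hs : Mirror G τ σ g h H) :
    (mover .L h.length = .R ∧ mover .L H.length = .L) ∨
      (mover .L h.length = .L ∧ mover .L H.length = .R) := by
  rw [← hs.length_eq, mover_succ]
  cases mover .L H.length <;> simp [Player.other]

lemma Mirror.not_ended_imaginary (hwin : ∀ h, ValidHist G .L h → Follows .L .R τ h →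
      Complete G .L h → fills G.ER (picked .L .R h))
    (himg : ∀ e ∈ G.ER, e.image σ ∈ G.EL)
    {h H : List ℕ} (hs : Mirror G τ σ g h H) (hne : ¬ ended G .L h) : ¬ ended G .L H :=
  fun hend => hne (.inl (fills_of_image_subset himg
    (hwin H hs.valid_imaginary hs.follows_imaginary (.inl hend)) hs.picked_right))

lemma Mirror.extend_of_mover_right (hτ : Legal G .L .R τ)
    (hwin : ∀ h, ValidHist G .L h → Follows .L .R τ h →
      Complete G .L h → fills G.ER (picked .L .R h))
    (himg : ∀ e ∈ G.ER, e.image σ ∈ G.EL)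
    (hgV : Set.MapsTo g G.V G.V) (hinv : Set.RightInvOn g σ G.V)
    {h H : List ℕ} (hs : Mirror G τ σ g h H) (hnc : ¬ Complete G .L h)
    (hm : mover .L h.length = .R) (hm' : mover .L H.length = .L) :
    Mirror G τ σ g (h ++ [τ h]) (H ++ [g (τ h)]) := by
  have hne : ¬ ended G .L h := fun hend => hnc (.inl hend)
  have hlt : h.length < G.V.card := hs.valid.length_le.lt_of_ne fun hfull => hnc (.inr hfull)
  obtain ⟨hvV, hvh⟩ := hτ h hs.valid hs.follows hne hlt hm
  have hgvH : g (τ h) ∉ H := fun hmem => by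
    rcases mem_picked_or_mem_picked_other (s := .L) (p := .L) hmem with hL | hR
    · rw [hs.picked_left] at hL
      obtain ⟨u, hu, hgu⟩ := Finset.mem_image.1 hL
      have hu' := mem_of_mem_picked hu
      rw [hinv.injOn (hs.valid.2.1 u hu') hvV hgu] at hu'
      exact hvh hu'
    · have := hs.picked_right (Finset.mem_image_of_mem σ hR)
      rw [hinv hvV] at this
      exact hvh (mem_of_mem_picked this)
  refine ⟨validHist_append_singleton_iff.2 ⟨hs.valid, hne, hvV, hvh⟩,
    follows_append_singleton_iff.2 ⟨hs.follows, fun _ => rfl⟩,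
    validHist_append_singleton_iff.2
      ⟨hs.valid_imaginary, hs.not_ended_imaginary hwin himg hne, hgV hvV, hgvH⟩,
    follows_append_singleton_iff.2
      ⟨hs.follows_imaginary, fun hR => absurd (hm'.symm.trans hR) (by decide)⟩,
    by simp [← hs.length_eq], ?_, ?_⟩
  · rw [picked_append_singleton_of_mover_eq hm', picked_append_singleton_of_mover_eq hm,
      Finset.image_insert, hs.picked_left]
  · rw [picked_append_singleton_of_mover_ne (by rw [hm']; decide),
      picked_append_singleton_of_mover_ne (by rw [hm]; decide)]
    exact hs.picked_right

lemma Mirror.extend_of_mover_left (hτ : Legal G .L .R τ)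
    (hwin : ∀ h, ValidHist G .L h → Follows .L .R τ h →
      Complete G .L h → fills G.ER (picked .L .R h))
    (himg : ∀ e ∈ G.ER, e.image σ ∈ G.EL)
    (hσV : Set.MapsTo σ G.V G.V) (hinv : Set.LeftInvOn g σ G.V)
    {h H : List ℕ} (hs : Mirror G τ σ g h H) (hnc : ¬ Complete G .L h)
    (hm : mover .L h.length = .L) (hm' : mover .L H.length = .R) :
    ∃ x, Mirror G τ σ g (h ++ [x]) (H ++ [τ H]) := by
  have hne : ¬ ended G .L h := fun hend => hnc (.inl hend)
  have hlt : h.length < G.V.card := hs.valid.length_le.lt_of_ne fun hfull => hnc (.inr hfull)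
  have hHne := hs.not_ended_imaginary hwin himg hne
  obtain ⟨hwV, hwH⟩ := hτ H hs.valid_imaginary hs.follows_imaginary hHne
    (by have := hs.length_eq; omega) hm'
  have hσw : σ (τ H) ∈ h → σ (τ H) ∈ picked .L .L h := fun hmem =>
    (mem_picked_or_mem_picked_other hmem).resolve_right fun (hR : _ ∈ picked .L .R h) => by
      have := Finset.mem_image_of_mem g hR
      rw [← hs.picked_left, hinv hwV] at this
      exact hwH (mem_of_mem_picked this)
  obtain ⟨x, hxV, hxh, hσx⟩ :
      ∃ x ∈ G.V, x ∉ h ∧ σ (τ H) ∈ insert x (picked .L .L h) := by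
    by_cases hmem : σ (τ H) ∈ h
    · obtain ⟨x, hxV, hxh⟩ := hs.valid.exists_fresh hlt
      exact ⟨x, hxV, hxh, Finset.mem_insert_of_mem (hσw hmem)⟩
    · exact ⟨_, hσV hwV, hmem, Finset.mem_insert_self _ _⟩
  refine ⟨x, validHist_append_singleton_iff.2 ⟨hs.valid, hne, hxV, hxh⟩,
    follows_append_singleton_iff.2
      ⟨hs.follows, fun hR => absurd (hm.symm.trans hR) (by decide)⟩,
    validHist_append_singleton_iff.2 ⟨hs.valid_imaginary, hHne, hwV, hwH⟩,
    follows_append_singleton_iff.2 ⟨hs.follows_imaginary, fun _ => rfl⟩,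
    by simp [← hs.length_eq], ?_, ?_⟩
  · rw [picked_append_singleton_of_mover_ne (by rw [hm']; decide),
      picked_append_singleton_of_mover_ne (by rw [hm]; decide)]
    exact hs.picked_left
  · rw [picked_append_singleton_of_mover_eq hm', picked_append_singleton_of_mover_eq hm,
      Finset.image_insert]
    exact Finset.insert_subset hσx (hs.picked_right.trans (Finset.subset_insert _ _))

lemma Mirror.false_of_complete
    (hwin : ∀ h, ValidHist G .L h → Follows .L .R τ h →
      Complete G .L h → fills G.ER (picked .L .R h))
    (himg : ∀ e ∈ G.ER, e.image σ ∈ G.EL)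
    (hpre : ∀ e ∈ G.ER, ∃ e' ∈ G.EL, e'.image σ = e)
    (hEL : ∀ e ∈ G.EL, e ⊆ G.V) (hinv : Set.LeftInvOn g σ G.V)
    {h H : List ℕ} (hs : Mirror G τ σ g h H) (hc : Complete G .L h) : False := by
  obtain ⟨_, he, hesub⟩ := hwin h hs.valid hs.follows hc
  obtain ⟨e', he', rfl⟩ := hpre _ he
  have hH : ended G .L H := .inl ⟨e', he', fun a ha => by
    rw [hs.picked_left]
    exact Finset.mem_image.2
      ⟨σ a, hesub (Finset.mem_image_of_mem σ ha), hinv (hEL e' he' ha)⟩⟩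
  have hL := fills_of_image_subset himg (hwin H hs.valid_imaginary hs.follows_imaginary (.inl hH))
    hs.picked_right
  exact hs.valid.not_fills_both (List.ne_nil_of_length_pos (by have := hs.length_eq; omega))
    ⟨hL, _, he, hesub⟩

theorem Mirror.false (hτ : Legal G .L .R τ)
    (hwin : ∀ h, ValidHist G .L h → Follows .L .R τ h →
      Complete G .L h → fills G.ER (picked .L .R h))
    (himg : ∀ e ∈ G.ER, e.image σ ∈ G.EL)
    (hpre : ∀ e ∈ G.ER, ∃ e' ∈ G.EL, e'.image σ = e)
    (hEL : ∀ e ∈ G.EL, e ⊆ G.V) (hσV : Set.MapsTo σ G.V G.V) (hgV : Set.MapsTo g G.V G.V)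
    (hinv : Set.InvOn g σ G.V G.V) {h H : List ℕ} (hs : Mirror G τ σ g h H) : False := by
  by_cases hc : Complete G .L h
  · exact hs.false_of_complete hwin himg hpre hEL hinv.1 hc
  have hlt : h.length < G.V.card := hs.valid.length_le.lt_of_ne fun hfull => hc (.inr hfull)
  rcases hs.movers with ⟨hm, hm'⟩ | ⟨hm, hm'⟩
  · exact (hs.extend_of_mover_right hτ hwin himg hgV hinv.2 hc hm hm').false
      hτ hwin himg hpre hEL hσV hgV hinv
  · obtain ⟨x, hs'⟩ := hs.extend_of_mover_left hτ hwin himg hσV hinv.1 hc hm hm'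
    exact hs'.false hτ hwin himg hpre hEL hσV hgV hinv
termination_by G.V.card - h.length

lemma exists_mirror_singleton
    (hwin : ∀ h, ValidHist G .L h → Follows .L .R τ h →
      Complete G .L h → fills G.ER (picked .L .R h))
    (hER : ∀ e ∈ G.ER, e.Nonempty) : ∃ x, Mirror G τ σ g [x] [] := by
  have hnc : ¬ Complete G .L [] := fun hc => by
    obtain ⟨e, he, hesub⟩ := hwin [] validHist_nil follows_nil hc
    obtain ⟨a, ha⟩ := hER e he
    simpa using hesub ha
  have hlt : 0 < G.V.card := Nat.pos_of_ne_zero fun h0 => hnc (.inr h0.symm)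
  obtain ⟨x, hxV, hxh⟩ := validHist_nil.exists_fresh (G := G) (s := .L) hlt
  refine ⟨x, validHist_append_singleton_iff.2 ⟨validHist_nil, fun hend => hnc (.inl hend),
    hxV, hxh⟩,
    (follows_append_singleton_iff (h := [])).2 ⟨follows_nil, fun hR => absurd hR (by decide)⟩,
    validHist_nil, follows_nil, rfl, ?_, by simp⟩
  rw [← List.nil_append [x], picked_append_singleton_of_mover_ne (by decide)]
  simp

lemma not_winsAs_right (hG : WellFormed G) (hbij : Set.BijOn σ G.V G.V)
    (himg : ∀ e ∈ G.ER, e.image σ ∈ G.EL)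
    (hpre : ∀ e ∈ G.ER, ∃ e' ∈ G.EL, e'.image σ = e) :
    ¬ WinsAs G .L .R := by
  rintro ⟨τ, hτ, hwin⟩
  obtain ⟨x, hs⟩ := exists_mirror_singleton (σ := σ) (g := Function.invFunOn σ G.V) hwin
    fun e he => (hG.2 e he).2
  exact hs.false hτ hwin himg hpre (fun e he => (hG.1 e he).1) hbij.mapsTo
    hbij.surjOn.mapsTo_invFunOn hbij.invOn_invFunOn

end StrategyStealing

/-- Strategy stealing: if there is a bijection `σ` of the vertex set such that the image
and the preimage under `σ` of every red edge are blue edges, then Left has a non-losing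
strategy as first player. -/
theorem strategy_stealing (G : Game) (hG : WellFormed G) (σ : ℕ → ℕ)
    (hbij : Set.BijOn σ ↑G.V ↑G.V)
    (himg : ∀ e ∈ G.ER, e.image σ ∈ G.EL)
    (hpre : ∀ e ∈ G.ER, ∃ e' ∈ G.EL, e'.image σ = e) :
    NonLosingAs G .L .L :=
  (nonLosingAs_or_winsAs_other G .L .L).resolve_right (not_winsAs_right hG hbij himg hpre)
end APG
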